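/- Consequently, for the n-dimensional linear system ẋ = Ax + Lu with A having n distinct real eigenvalues, any bang-bang control of the form u(t) = ζ·sign(Lᵀλ(t)) with λ̇ = −Aᵀλ, Lᵀλ not identically zero, has at most n − 1 switches. -/

import Mathlib

open Matrix Polynomial Topology

/-!
By Cayley–Hamilton, `∏ᵢ (Aᵀ - μᵢ) = 0`, so the switching function `g = Lᵀλ` is annihilated by the
differential operator `∏ᵢ (D + μᵢ)`. Since `(D + a) f = e^{-at} (e^{at} f)'`, Rolle's theorem puts
a zero of `(D + a) f` strictly between any two zeros of `f`; by induction on the number of factors,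
a nonzero `g` has at most `n - 1` zeros. A switch is a zero of `g`.
-/

theorem Set.Finite.finite_ncard_le_of_interleaved {α : Type*} [LinearOrder α] {S Z : Set α}
    (hZ : Z.Finite)
    (h : ∀ x ∈ S, ∀ y ∈ S, x < y → ∃ z ∈ Z, x < z ∧ z < y) :
    S.Finite ∧ S.ncard ≤ Z.ncard + 1 := by
  have hcard (s : Finset α) (hs : ↑s ⊆ S) : s.card ≤ Z.ncard + 1 := by
    rw [Set.ncard_eq_toFinset_card Z hZ]
    refine Finset.card_le_of_interleaved fun x hx y hy hxy _ => ?_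
    simpa using h x (hs hx) y (hs hy) hxy
  have hS : S.Finite := by
    by_contra hS
    obtain ⟨s, hs, hs_card⟩ := Set.Infinite.exists_subset_card_eq hS (Z.ncard + 2)
    have := hcard s hs
    omega
  exact ⟨hS, by simpa [Set.ncard_eq_toFinset_card S hS] using hcard hS.toFinset (by simp)⟩

section FirstOrder

variable {f h : ℝ → ℝ} {a : ℝ}

theorem hasDerivAt_exp_mul_mul {t : ℝ} (hf : HasDerivAt f (h t - a * f t) t) :
    HasDerivAt (fun s => Real.exp (a * s) * f s) (Real.exp (a * t) * h t) t := by
  have he : HasDerivAt (fun s => Real.exp (a * s)) (Real.exp (a * t) * a) t :=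
    ((hasDerivAt_id t).const_mul a).exp.congr_deriv (by simp)
  exact (he.mul hf).congr_deriv (by ring)

theorem eq_zero_of_hasDerivAt_of_eq_zero (hf : ∀ t, HasDerivAt f (h t - a * f t) t) (hh : h = 0)
    {t₀ : ℝ} (ht₀ : f t₀ = 0) : f = 0 := by
  have hφ := fun t => hasDerivAt_exp_mul_mul (hf t)
  funext t
  have := is_const_of_deriv_eq_zero (fun s => (hφ s).differentiableAt)
    (fun s => by simp [(hφ s).deriv, hh]) t t₀
  simpa [ht₀, (Real.exp_pos _).ne'] using this

theorem exists_zero_between_of_hasDerivAt (hf : ∀ t, HasDerivAt f (h t - a * f t) t)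
    {x y : ℝ} (hx : f x = 0) (hy : f y = 0) (hxy : x < y) : ∃ z, h z = 0 ∧ x < z ∧ z < y := by
  have hφ := fun t => hasDerivAt_exp_mul_mul (hf t)
  obtain ⟨z, hz, hφz⟩ := exists_hasDerivAt_eq_zero hxy
    (fun s _ => (hφ s).continuousAt.continuousWithinAt) (by simp [hx, hy]) (fun s _ => hφ s)
  exact ⟨z, by simpa [(Real.exp_pos _).ne'] using hφz, hz⟩

end FirstOrder

/-- `AnnihilatedBy l f` encodes `∏_{a ∈ l} (D + a) f = 0`, peeling off one factor at a time:
`f' + a f = h` with `h` annihilated by the remaining factors. No smoothness of `f` is assumed. -/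
def AnnihilatedBy : List ℝ → (ℝ → ℝ) → Prop
  | [], f => f = 0
  | a :: l, f => ∃ h, AnnihilatedBy l h ∧ ∀ t, HasDerivAt f (h t - a * f t) t

theorem AnnihilatedBy.eq_zero_or_ncard_lt : ∀ {l : List ℝ} {f : ℝ → ℝ}, AnnihilatedBy l f →
    f = 0 ∨ ({t | f t = 0}.Finite ∧ {t | f t = 0}.ncard < l.length)
  | [], _, hf => .inl hf
  | a :: l, f, ⟨h, hh, hf⟩ => by
    rcases Set.eq_empty_or_nonempty {t | f t = 0} with hempty | ⟨t₀, ht₀⟩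
    · simp [hempty]
    rcases hh.eq_zero_or_ncard_lt with h0 | ⟨hfin, hcard⟩
    · exact .inl (eq_zero_of_hasDerivAt_of_eq_zero hf h0 ht₀)
    · obtain ⟨hfin', hcard'⟩ := hfin.finite_ncard_le_of_interleaved (S := {t | f t = 0})
        fun x hx y hy hxy => exists_zero_between_of_hasDerivAt hf hx hy hxy
      exact .inr ⟨hfin', by simp only [List.length_cons]; omega⟩

section LinearSystem

variable {ι : Type*} [Fintype ι]

theorem HasDerivAt.matrix_mulVec {lam : ℝ → ι → ℝ} {w : ι → ℝ} {t : ℝ} (M : Matrix ι ι ℝ)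
    (hd : HasDerivAt lam w t) : HasDerivAt (fun s => M *ᵥ lam s) (M *ᵥ w) t :=
  (LinearMap.toContinuousLinearMap (mulVecLin M)).hasFDerivAt.comp_hasDerivAt t hd

theorem HasDerivAt.const_dotProduct {lam : ℝ → ι → ℝ} {w : ι → ℝ} {t : ℝ} (v : ι → ℝ)
    (hd : HasDerivAt lam w t) : HasDerivAt (fun s => v ⬝ᵥ lam s) (v ⬝ᵥ w) t :=
  (LinearMap.toContinuousLinearMap (dotProductBilin ℝ ℝ v)).hasFDerivAt.comp_hasDerivAt t hd

theorem Matrix.prod_map_sub_smul_one_eq_zero {R : Type*} [CommRing R] [DecidableEq ι]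
    {M : Matrix ι ι R} {l : List R} (h : M.charpoly = (l.map fun a => X - C a).prod) :
    (l.map fun a => M - a • (1 : Matrix ι ι R)).prod = 0 := by
  have hCH := aeval_self_charpoly M
  rw [h, map_list_prod, List.map_map] at hCH
  refine (congrArg List.prod (List.map_congr_left fun a _ => ?_)).trans hCH
  simp [Algebra.algebraMap_eq_smul_one]

/-- If `λ' = -Mλ`, then `(D + a) (vᵀλ) = -vᵀ (M - a) λ`, and `(M - a) λ` solves the same system. -/
theorem annihilatedBy_dotProduct [DecidableEq ι] {M : Matrix ι ι ℝ} :
    ∀ {l : List ℝ} {lam : ℝ → ι → ℝ}, (∀ t, HasDerivAt lam (-(M *ᵥ lam t)) t) →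
    (∀ t, (l.map fun a => M - a • 1).prod *ᵥ lam t = 0) →
    ∀ v, AnnihilatedBy l (fun t => v ⬝ᵥ lam t)
  | [], lam, _, hl, v => by
    ext t
    simpa using congrArg (v ⬝ᵥ ·) (hl t)
  | a :: l, lam, hlam, hl, v => by
    have hcommM : Commute (M - a • 1) M :=
      (Commute.refl M).sub_left ((Commute.one_left M).smul_left a)
    have hcomm (b : ℝ) : Commute (M - a • 1) (M - b • 1) :=
      hcommM.sub_right ((Commute.one_right _).smul_right b)
    refine ⟨fun t => -v ⬝ᵥ ((M - a • 1) *ᵥ lam t),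
      annihilatedBy_dotProduct (M := M) (fun t => ?_) (fun t => ?_) _, fun t => ?_⟩
    · convert (hlam t).matrix_mulVec (M - a • 1) using 1
      rw [mulVec_neg, mulVec_mulVec, mulVec_mulVec, hcommM.eq]
    · rw [mulVec_mulVec, ← (Commute.list_prod_right _ _ fun _ hb => ?_).eq]
      · exact hl t
      obtain ⟨b, -, rfl⟩ := List.mem_map.1 hb
      exact hcomm b
    · convert (hlam t).const_dotProduct v using 1
      simp only [sub_mulVec, smul_mulVec, one_mulVec, dotProduct_sub, dotProduct_neg,
        neg_dotProduct, dotProduct_smul, smul_eq_mul]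
      ring

end LinearSystem

def switchingTimes (g : ℝ → ℝ) : Set ℝ :=
  {t | ∀ ε > (0:ℝ), ∃ s1 ∈ Set.Ioo (t - ε) t, ∃ s2 ∈ Set.Ioo t (t + ε), g s1 * g s2 < 0}

theorem switchingTimes_subset_zeros {g : ℝ → ℝ} (hg : Continuous g) :
    switchingTimes g ⊆ {t | g t = 0} := by
  intro t ht
  by_contra h0
  have hsign : ∀ᶠ s in 𝓝 t, 0 < g s * g t :=
    (hg.continuousAt.mul continuousAt_const).eventually (lt_mem_nhds (mul_self_pos.2 h0))
  obtain ⟨ε, hε, hball⟩ := Metric.eventually_nhds_iff_ball.1 hsign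
  obtain ⟨s1, hs1, s2, hs2, hneg⟩ := ht ε hε
  have h1 := hball s1 (by rw [Real.ball_eq_Ioo]; exact ⟨hs1.1, by linarith [hs1.2]⟩)
  have h2 := hball s2 (by rw [Real.ball_eq_Ioo]; exact ⟨by linarith [hs2.1], hs2.2⟩)
  nlinarith [mul_pos h1 h2, sq_nonneg (g t)]

theorem stmt_16_general (n : ℕ) (A : Matrix (Fin n) (Fin n) ℝ) (L : Fin n → ℝ)
    (μ : Fin n → ℝ)
    (hchar : A.charpoly = ∏ i : Fin n, (X - C (μ i)))
    (lam : ℝ → Fin n → ℝ)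
    (hlam : ∀ t, HasDerivAt lam (-(Aᵀ.mulVec (lam t))) t)
    (hg : ¬ ∀ t, L ⬝ᵥ lam t = 0) :
    {t : ℝ | ∀ ε > (0:ℝ), ∃ s1 ∈ Set.Ioo (t - ε) t, ∃ s2 ∈ Set.Ioo t (t + ε),
        (L ⬝ᵥ lam s1) * (L ⬝ᵥ lam s2) < 0}.Finite ∧
    {t : ℝ | ∀ ε > (0:ℝ), ∃ s1 ∈ Set.Ioo (t - ε) t, ∃ s2 ∈ Set.Ioo t (t + ε),
        (L ⬝ᵥ lam s1) * (L ⬝ᵥ lam s2) < 0}.ncard ≤ n - 1 := by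
  have hCH : (((List.finRange n).map μ).map fun a => Aᵀ - a • 1).prod = 0 :=
    prod_map_sub_smul_one_eq_zero <| by
      rw [charpoly_transpose, hchar, Fin.prod_univ_def, List.map_map]; rfl
  have hann := annihilatedBy_dotProduct hlam (fun t => by rw [hCH, zero_mulVec]) L
  obtain h0 | ⟨hfin, hcard⟩ := hann.eq_zero_or_ncard_lt
  · exact absurd (congrFun h0) hg
  have hcont : Continuous fun t => L ⬝ᵥ lam t :=
    continuous_const.dotProduct (continuous_iff_continuousAt.2 fun t => (hlam t).continuousAt)
  have hsub := switchingTimes_subset_zeros hcont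
  rw [List.length_map, List.length_finRange] at hcard
  exact ⟨hfin.subset hsub, (Set.ncard_le_ncard hsub hfin).trans (by omega)⟩

/-- If A has n distinct real eigenvalues and λ is a nonzero solution of
    λ̇ = −Aᵀλ whose switching function g(t) = Lᵀλ(t) is not identically
    zero, then g has at most n − 1 sign changes (switches). -/
theorem stmt_16 (n : ℕ) (A : Matrix (Fin n) (Fin n) ℝ) (L : Fin n → ℝ)
    (ζ : ℝ) (hζ : 0 < ζ)
    (μ : Fin n → ℝ) (hμ : Function.Injective μ)
    (hchar : A.charpoly = ∏ i : Fin n, (X - C (μ i)))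
    (lam : ℝ → Fin n → ℝ)
    (hlam : ∀ t, HasDerivAt lam (-(Aᵀ.mulVec (lam t))) t)
    (hlam0 : lam 0 ≠ 0)
    (hg : ¬ ∀ t, L ⬝ᵥ lam t = 0) :
    {t : ℝ | ∀ ε > (0:ℝ), ∃ s1 ∈ Set.Ioo (t - ε) t, ∃ s2 ∈ Set.Ioo t (t + ε),
        (L ⬝ᵥ lam s1) * (L ⬝ᵥ lam s2) < 0}.Finite ∧
    {t : ℝ | ∀ ε > (0:ℝ), ∃ s1 ∈ Set.Ioo (t - ε) t, ∃ s2 ∈ Set.Ioo t (t + ε),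
        (L ⬝ᵥ lam s1) * (L ⬝ᵥ lam s2) < 0}.ncard ≤ n - 1 :=
  stmt_16_general n A L μ hchar lam hlam hg
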